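/- arXiv:1312.4717 — 9 statements merged into one kernel-verified Lean document; each statement's English description precedes it below -/
import Mathlib

section
/- Let B be an m×m real matrix with eigenvalues c_i + i·d_i. Then Σ_{i=1}^m c_i² ≤ (1/2)·tr(B·B + B·Bᵀ) and Σ_{i=1}^m d_i² ≤ (1/2)·tr(B·Bᵀ − B·B). -/
/-!
By Schur triangulation a complex matrix `A` is unitarily similar to an upper triangular `T`, whose
diagonal lists the eigenvalues `λᵢ` with multiplicity. Unitary conjugation preserves `tr (A ^ k)`
and `tr (A Aᴴ)`, so `∑ λᵢ ^ k = tr (A ^ k)` and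
`∑ |λᵢ|² = ∑ |Tᵢᵢ|² ≤ ∑ |Tᵢₖ|² = tr (A Aᴴ)` (Schur's inequality).
For `A = B` real with `λᵢ = cᵢ + i dᵢ`, the real part of the case `k = 2` reads
`∑ (cᵢ² - dᵢ²) = tr (B B)` and Schur's inequality reads `∑ (cᵢ² + dᵢ²) ≤ tr (B Bᵀ)`;
half their sum and half their difference are the two claims.
-/

open Matrix Polynomial

theorem LinearMap.toMatrix_orthonormalBasis_apply {𝕜 E ι : Type*} [RCLike 𝕜]
    [NormedAddCommGroup E] [InnerProductSpace 𝕜 E] [Fintype ι] [DecidableEq ι]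
    (b : OrthonormalBasis ι 𝕜 E) (f : Module.End 𝕜 E) (i j : ι) :
    LinearMap.toMatrix b.toBasis b.toBasis f i j = inner 𝕜 (b i) (f (b j)) := by
  rw [LinearMap.toMatrix_apply, OrthonormalBasis.coe_toBasis_repr_apply,
    OrthonormalBasis.repr_apply_apply, OrthonormalBasis.coe_toBasis]

theorem Module.End.HasEigenvalue.exists_unit_eigenvector {𝕜 E : Type*} [RCLike 𝕜]
    [NormedAddCommGroup E] [InnerProductSpace 𝕜 E] {f : Module.End 𝕜 E} {μ : 𝕜}
    (hμ : f.HasEigenvalue μ) : ∃ u : E, ‖u‖ = 1 ∧ f u = μ • u := by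
  obtain ⟨v, hv⟩ := hμ.exists_hasEigenvector
  refine ⟨(‖v‖⁻¹ : 𝕜) • v, ?_, ?_⟩
  · rw [norm_smul, norm_inv, RCLike.norm_ofReal, abs_norm,
      inv_mul_cancel₀ (norm_ne_zero_iff.mpr hv.2)]
  · rw [map_smul, hv.apply_eq_smul, smul_comm]

namespace Module.End

variable {E : Type*} [NormedAddCommGroup E] [InnerProductSpace ℂ E]

theorem exists_orthonormalBasis_toMatrix_isUpperTriangular
    [FiniteDimensional ℂ E] {n : ℕ} (hn : finrank ℂ E = n) (f : Module.End ℂ E) :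
    ∃ b : OrthonormalBasis (Fin n) ℂ E,
      (LinearMap.toMatrix b.toBasis b.toBasis f).IsUpperTriangular := by
  induction n generalizing E with
  | zero => exact ⟨(stdOrthonormalBasis ℂ E).reindex (finCongr hn), fun i => i.elim0⟩
  | succ n ih =>
    have : Nontrivial E := Module.nontrivial_of_finrank_eq_succ hn
    have : Fact (finrank ℂ E = n + 1) := ⟨hn⟩
    obtain ⟨μ, hμ⟩ := f.exists_eigenvalue
    obtain ⟨u, hu, hfu⟩ := hμ.exists_unit_eigenvector
    have hu0 : u ≠ 0 := norm_ne_zero_iff.mp (by rw [hu]; exact one_ne_zero)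
    let K := (ℂ ∙ u)ᗮ
    let g : Module.End ℂ K := K.orthogonalProjectionOnto.toLinearMap ∘ₗ f ∘ₗ K.subtype
    obtain ⟨b', hb'⟩ := ih (Submodule.finrank_orthogonal_span_singleton hu0) g
    have hon : Orthonormal ℂ (vecCons u fun i => (b' i : E)) :=
      orthonormal_vecCons_iff.mpr ⟨hu,
        fun i => Submodule.mem_orthogonal_singleton_iff_inner_right.mp (b' i).2,
        b'.orthonormal.comp_linearIsometry K.subtypeₗᵢ⟩
    let b : OrthonormalBasis (Fin (n + 1)) ℂ E :=
      (basisOfOrthonormalOfCardEqFinrank hon (by simp [hn])).toOrthonormalBasis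
        (by rwa [coe_basisOfOrthonormalOfCardEqFinrank])
    have hb : ⇑b = vecCons u fun i => (b' i : E) := by
      simp [b, coe_basisOfOrthonormalOfCardEqFinrank]
    refine ⟨b, fun i j hji => ?_⟩
    rw [LinearMap.toMatrix_orthonormalBasis_apply, hb]
    induction i using Fin.cases with
    | zero => exact absurd hji (Fin.not_lt_zero j)
    | succ i =>
      induction j using Fin.cases with
      | zero =>
        rw [cons_val_zero, cons_val_succ, hfu, inner_smul_right,
          Submodule.mem_orthogonal_singleton_iff_inner_left.mp (b' i).2, mul_zero]
      | succ j =>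
        have hg := hb' (Fin.succ_lt_succ_iff.mp hji)
        rw [LinearMap.toMatrix_orthonormalBasis_apply] at hg
        rwa [cons_val_succ, cons_val_succ,
          ← Submodule.inner_orthogonalProjectionOnto_eq_of_mem_left]

end Module.End

theorem OrthonormalBasis.conjTranspose_toMatrix_mul_mul_toMatrix {𝕜 n ι : Type*} [RCLike 𝕜]
    [Fintype n] [DecidableEq n] [Fintype ι] [DecidableEq ι] (A : Matrix n n 𝕜)
    (b : OrthonormalBasis ι 𝕜 (EuclideanSpace 𝕜 n)) :
    ((EuclideanSpace.basisFun n 𝕜).toBasis.toMatrix b)ᴴ * A *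
        (EuclideanSpace.basisFun n 𝕜).toBasis.toMatrix b =
      LinearMap.toMatrix b.toBasis b.toBasis (toEuclideanLin A) := by
  ext i j
  rw [LinearMap.toMatrix_orthonormalBasis_apply, EuclideanSpace.inner_eq_star_dotProduct]
  simp only [mul_apply, conjTranspose_apply, Module.Basis.toMatrix_apply,
    OrthonormalBasis.coe_toBasis_repr_apply, EuclideanSpace.basisFun_repr, toLpLin_apply,
    mulVec, dotProduct, Finset.sum_mul, Pi.star_apply]
  rw [Finset.sum_comm]
  exact Finset.sum_congr rfl fun _ _ => Finset.sum_congr rfl fun _ _ => by ring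

namespace Matrix

section UpperTriangular

variable {R n : Type*} [CommRing R] [Fintype n] [LinearOrder n]

theorem IsUpperTriangular.diag_mul {M N : Matrix n n R} (hM : M.IsUpperTriangular)
    (hN : N.IsUpperTriangular) : (M * N).diag = M.diag * N.diag := by
  ext i
  rw [diag_apply, mul_apply, Finset.sum_eq_single i]
  · rfl
  · intro k _ hki
    rcases hki.lt_or_gt with hki | hik
    · rw [hM hki, zero_mul]
    · rw [hN hik, mul_zero]
  · exact fun hi => absurd (Finset.mem_univ i) hi

theorem IsUpperTriangular.diag_pow [DecidableEq n] {M : Matrix n n R} (hM : M.IsUpperTriangular)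
    (k : ℕ) : (M ^ k).diag = M.diag ^ k := by
  induction k with
  | zero => ext; simp
  | succ k ih => rw [pow_succ, IsUpperTriangular.diag_mul (hM.pow k) hM, ih, pow_succ]

theorem IsUpperTriangular.roots_charpoly [IsDomain R] [DecidableEq n] {M : Matrix n n R}
    (hM : M.IsUpperTriangular) : M.charpoly.roots = Finset.univ.val.map M.diag := by
  rw [charpoly_of_isUpperTriangular M hM, Finset.prod_eq_multiset_prod]
  have := roots_multiset_prod_X_sub_C (Finset.univ.val.map M.diag)
  rwa [Multiset.map_map] at this

end UpperTriangular

section Unitary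

variable {R n : Type*} [CommRing R] [StarRing R] [Fintype n] [DecidableEq n]

theorem trace_conjStarAlgAut (u : unitaryGroup n R) (M : Matrix n n R) :
    (Unitary.conjStarAlgAut R _ u M).trace = M.trace := by
  rw [Unitary.conjStarAlgAut_apply, trace_mul_comm, ← Matrix.mul_assoc,
    Unitary.coe_star_mul_self, Matrix.one_mul]

theorem charpoly_conjStarAlgAut (u : unitaryGroup n R) (M : Matrix n n R) :
    (Unitary.conjStarAlgAut R _ u M).charpoly = M.charpoly := by
  rw [Unitary.conjStarAlgAut_apply, charpoly_mul_comm, ← Matrix.mul_assoc,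
    Unitary.coe_star_mul_self, Matrix.one_mul]

end Unitary

theorem sum_normSq_diag_le_re_trace_mul_conjTranspose {n : Type*} [Fintype n]
    (T : Matrix n n ℂ) : ∑ i, Complex.normSq (T i i) ≤ (T * Tᴴ).trace.re := by
  have hT : (T * Tᴴ).trace.re = ∑ i, ∑ k, Complex.normSq (T i k) := by
    simp [trace, mul_apply, Complex.mul_conj]
  rw [hT]
  exact Finset.sum_le_sum fun i _ =>
    Finset.single_le_sum (fun k _ => Complex.normSq_nonneg (T i k)) (Finset.mem_univ i)

theorem exists_isUpperTriangular_eq_conjStarAlgAut {m : ℕ} (A : Matrix (Fin m) (Fin m) ℂ) :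
    ∃ (u : unitaryGroup (Fin m) ℂ) (T : Matrix (Fin m) (Fin m) ℂ),
      T.IsUpperTriangular ∧ A = Unitary.conjStarAlgAut ℂ _ u T := by
  obtain ⟨b, hb⟩ := Module.End.exists_orthonormalBasis_toMatrix_isUpperTriangular
    finrank_euclideanSpace_fin (toEuclideanLin A)
  let u : unitaryGroup (Fin m) ℂ :=
    ⟨_, (EuclideanSpace.basisFun (Fin m) ℂ).toMatrix_orthonormalBasis_mem_unitary b⟩
  refine ⟨u, (Unitary.conjStarAlgAut ℂ _ u).symm A, ?_,
    ((Unitary.conjStarAlgAut ℂ _ u).apply_symm_apply A).symm⟩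
  rwa [Unitary.conjStarAlgAut_symm_apply, star_eq_conjTranspose,
    b.conjTranspose_toMatrix_mul_mul_toMatrix]

theorem sum_pow_roots_charpoly {m : ℕ} (A : Matrix (Fin m) (Fin m) ℂ) (k : ℕ) :
    (A.charpoly.roots.map (· ^ k)).sum = (A ^ k).trace := by
  obtain ⟨u, T, hT, rfl⟩ := A.exists_isUpperTriangular_eq_conjStarAlgAut
  rw [charpoly_conjStarAlgAut, ← map_pow, trace_conjStarAlgAut, hT.roots_charpoly,
    Multiset.map_map, trace, hT.diag_pow]
  rfl

theorem sum_normSq_roots_charpoly_le {m : ℕ} (A : Matrix (Fin m) (Fin m) ℂ) :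
    (A.charpoly.roots.map Complex.normSq).sum ≤ (A * Aᴴ).trace.re := by
  obtain ⟨u, T, hT, rfl⟩ := A.exists_isUpperTriangular_eq_conjStarAlgAut
  rw [charpoly_conjStarAlgAut, ← star_eq_conjTranspose, ← map_star, ← map_mul,
    trace_conjStarAlgAut, hT.roots_charpoly, Multiset.map_map]
  exact sum_normSq_diag_le_re_trace_mul_conjTranspose T

end Matrix

theorem stmt2 {m : ℕ} (B : Matrix (Fin m) (Fin m) ℝ) (c d : Fin m → ℝ)
    (h : (B.map (Complex.ofReal)).charpoly.roots
        = Multiset.map (fun i => (c i : ℂ) + d i * Complex.I) Finset.univ.val) :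
    ∑ i, (c i) ^ 2 ≤ (1 / 2) * ((B * B).trace + (B * Bᵀ).trace) ∧
    ∑ i, (d i) ^ 2 ≤ (1 / 2) * ((B * Bᵀ).trace - (B * B).trace) := by
  have hsum {α : Type} [AddCommMonoid α] (f : ℂ → α) :
      ∑ i, f (c i + d i * Complex.I) = ((B.map Complex.ofReal).charpoly.roots.map f).sum := by
    rw [h, Multiset.map_map]
    rfl
  have hsq : ∑ i, (c i ^ 2 - d i ^ 2) = (B * B).trace := by
    have := congrArg Complex.re
      ((hsum (· ^ 2)).trans ((B.map Complex.ofReal).sum_pow_roots_charpoly 2))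
    simpa [sq, Complex.re_sum, trace, mul_apply] using this
  have hnorm : ∑ i, (c i ^ 2 + d i ^ 2) ≤ (B * Bᵀ).trace := by
    have := (hsum Complex.normSq).trans_le (sum_normSq_roots_charpoly_le _)
    simpa [Complex.normSq_add_mul_I, trace, mul_apply] using this
  rw [Finset.sum_sub_distrib] at hsq
  rw [Finset.sum_add_distrib] at hnorm
  constructor <;> linarith
end

section
/- Let A ∈ ℝ^{m×q} with Aᵀ b = 0 for a unit vector b, δ > 0, Ω = A Aᵀ + δ I_m, Z = Ψ₁ᵀ A, and Θ = Z Zᵀ + δ I_{m−1}, where Ψ₁ is column-orthonormal with Ψ₁ᵀ b = 0. Then for every integer k ≥ 1: Ψ₁ᵀ Ω^{−k} Ψ₁ = Θ^{−k}, bᵀ Ω^{−k} Ψ₁ = 0, and bᵀ Ω^{−k} b = δ^{−k}. -/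
/-!
Adjoining the unit vector `b` to `Ψ` gives a square matrix `[Ψ | b]` with orthonormal columns,
hence with orthonormal rows: `Ψ Ψᵀ + b bᵀ = 1`. As `Aᵀ b = 0`, this gives `Ψ Ψᵀ A = A`, so
`Ω Ψ = Ψ Θ` and `Ω b = δ b`. Both `Ω` and `Θ` are positive definite, so these relations pass
to `Ω⁻¹`, `Θ⁻¹` and then to all of their powers, and the three identities follow at once.
-/

open Matrix

namespace Matrix

variable {ι κ μ R K : Type*} [Fintype ι] [DecidableEq ι] [Fintype κ] [DecidableEq κ]

section CommRing

variable [CommRing R]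

theorem pow_mul_eq_mul_pow_of_mul_eq {M : Matrix ι ι R} {N : Matrix κ κ R} {X : Matrix ι κ R}
    (h : M * X = X * N) (k : ℕ) : M ^ k * X = X * N ^ k := by
  induction k with
  | zero => simp
  | succ k ih =>
    rw [pow_succ, Matrix.mul_assoc, h, ← Matrix.mul_assoc, ih, Matrix.mul_assoc, ← pow_succ]

theorem inv_mul_eq_mul_inv_of_mul_eq {M : Matrix ι ι R} {N : Matrix κ κ R} {X : Matrix ι κ R}
    (hM : IsUnit M.det) (hN : IsUnit N.det) (h : M * X = X * N) : M⁻¹ * X = X * N⁻¹ :=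
  calc M⁻¹ * X = M⁻¹ * (X * N) * N⁻¹ := by
        rw [Matrix.mul_assoc, Matrix.mul_assoc, mul_nonsing_inv _ hN, Matrix.mul_one]
    _ = X * N⁻¹ := by rw [← h, ← Matrix.mul_assoc, nonsing_inv_mul _ hM, Matrix.one_mul]

theorem pow_mulVec_of_mulVec_eq_smul {M : Matrix ι ι R} {v : ι → R} {c : R}
    (h : M *ᵥ v = c • v) (k : ℕ) : (M ^ k) *ᵥ v = c ^ k • v := by
  induction k with
  | zero => simp
  | succ k ih => rw [pow_succ', ← mulVec_mulVec, ih, mulVec_smul, h, smul_smul, pow_succ]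

theorem mul_transpose_add_vecMulVec_eq_one (hcard : Fintype.card ι = Fintype.card κ + 1)
    {Ψ : Matrix ι κ R} {b : ι → R} (hΨ : Ψᵀ * Ψ = 1) (hΨb : Ψᵀ *ᵥ b = 0) (hb : b ⬝ᵥ b = 1) :
    Ψ * Ψᵀ + vecMulVec b b = 1 := by
  have e : ι ≃ κ ⊕ Fin 1 := Fintype.equivOfCardEq (by simp [hcard])
  have hcol : Ψᵀ * replicateCol (Fin 1) b = 0 := by
    rw [← replicateCol_mulVec, hΨb]
    ext; simp
  have hrow : replicateRow (Fin 1) b * Ψ = 0 := by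
    rw [← replicateRow_vecMul, ← mulVec_transpose, hΨb]
    ext; simp
  have hbb : replicateRow (Fin 1) b * replicateCol (Fin 1) b = 1 := by
    ext i j
    fin_cases i; fin_cases j
    simp [hb]
  have hcols : fromRows Ψᵀ (replicateRow (Fin 1) b) * fromCols Ψ (replicateCol (Fin 1) b) = 1 := by
    rw [fromRows_mul_fromCols, hΨ, hcol, hrow, hbb, fromBlocks_one]
  rw [← (fromCols_mul_fromRows_eq_one_comm e _ _ _ _).mpr hcols, fromCols_mul_fromRows,
    vecMulVec_eq (Fin 1)]
  rfl

theorem mul_transpose_add_smul_one_mul_eq [Fintype μ] {Ψ : Matrix ι κ R} {A : Matrix ι μ R}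
    (hA : Ψ * Ψᵀ * A = A) (δ : R) :
    (A * Aᵀ + δ • 1) * Ψ = Ψ * ((Ψᵀ * A) * (Ψᵀ * A)ᵀ + δ • 1) := by
  rw [transpose_mul, transpose_transpose, Matrix.add_mul, Matrix.mul_add, Matrix.smul_mul,
    Matrix.mul_smul, Matrix.one_mul, Matrix.mul_one]
  congr 1
  nth_rw 1 [← hA]
  simp only [Matrix.mul_assoc]

theorem mul_transpose_add_smul_one_mulVec_eq [Fintype μ] {A : Matrix ι μ R} {b : ι → R}
    (hAb : Aᵀ *ᵥ b = 0) (δ : R) : (A * Aᵀ + δ • 1) *ᵥ b = δ • b := by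
  rw [add_mulVec, ← mulVec_mulVec, hAb, mulVec_zero, zero_add, smul_mulVec, one_mulVec]

end CommRing

theorem inv_mulVec_of_mulVec_eq_smul [Field K] {M : Matrix ι ι K} {v : ι → K} {c : K}
    (hM : IsUnit M.det) (hc : c ≠ 0) (h : M *ᵥ v = c • v) : M⁻¹ *ᵥ v = c⁻¹ • v := by
  calc M⁻¹ *ᵥ v = c⁻¹ • M⁻¹ *ᵥ (M *ᵥ v) := by
        rw [h, mulVec_smul, smul_smul, inv_mul_cancel₀ hc, one_smul]
    _ = c⁻¹ • v := by rw [mulVec_mulVec, nonsing_inv_mul _ hM, one_mulVec]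

theorem posDef_mul_transpose_add_smul_one [Fintype μ] (A : Matrix ι μ ℝ) {δ : ℝ} (hδ : 0 < δ) :
    (A * Aᵀ + δ • 1).PosDef :=
  PosDef.posSemidef_add (posSemidef_self_mul_conjTranspose A) (PosDef.one.smul hδ)

end Matrix

theorem stmt9 {m q : ℕ} (b : Fin m → ℝ) (hb : b ⬝ᵥ b = 1)
    (Ψ : Matrix (Fin m) (Fin (m - 1)) ℝ)
    (hΨ : Ψᵀ * Ψ = 1) (hΨb : Ψᵀ.mulVec b = 0)
    (A : Matrix (Fin m) (Fin q) ℝ) (hAb : Aᵀ.mulVec b = 0)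
    (δ : ℝ) (hδ : 0 < δ)
    (Ω : Matrix (Fin m) (Fin m) ℝ) (hΩ : Ω = A * Aᵀ + δ • 1)
    (Z : Matrix (Fin (m - 1)) (Fin q) ℝ) (hZ : Z = Ψᵀ * A)
    (Θ : Matrix (Fin (m - 1)) (Fin (m - 1)) ℝ) (hΘ : Θ = Z * Zᵀ + δ • 1) :
    ∀ k : ℕ, 1 ≤ k →
      Ψᵀ * Ω⁻¹ ^ k * Ψ = Θ⁻¹ ^ k ∧
      Matrix.vecMul b (Ω⁻¹ ^ k * Ψ) = 0 ∧
      b ⬝ᵥ (Ω⁻¹ ^ k).mulVec b = δ⁻¹ ^ k := by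
  intro k _
  have hm : m ≠ 0 := by
    rintro rfl
    simp at hb
  have hcompl : Ψ * Ψᵀ + vecMulVec b b = 1 :=
    mul_transpose_add_vecMulVec_eq_one (by simp only [Fintype.card_fin]; omega) hΨ hΨb hb
  have hΨΨA : Ψ * Ψᵀ * A = A := by
    have hbbA : vecMulVec b b * A = 0 := by
      rw [vecMulVec_mul, ← mulVec_transpose, hAb]
      ext; simp [vecMulVec_apply]
    rw [← add_zero (Ψ * Ψᵀ * A), ← hbbA, ← Matrix.add_mul, hcompl, Matrix.one_mul]
  have hΩ_unit : IsUnit Ω.det :=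
    (isUnit_iff_isUnit_det _).mp (hΩ ▸ posDef_mul_transpose_add_smul_one A hδ).isUnit
  have hΘ_unit : IsUnit Θ.det :=
    (isUnit_iff_isUnit_det _).mp (hΘ ▸ posDef_mul_transpose_add_smul_one Z hδ).isUnit
  have hΨk : Ω⁻¹ ^ k * Ψ = Ψ * Θ⁻¹ ^ k := by
    refine pow_mul_eq_mul_pow_of_mul_eq (inv_mul_eq_mul_inv_of_mul_eq hΩ_unit hΘ_unit ?_) k
    rw [hΩ, hΘ, hZ]
    exact mul_transpose_add_smul_one_mul_eq hΨΨA δ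
  have hbk : (Ω⁻¹ ^ k) *ᵥ b = δ⁻¹ ^ k • b := by
    refine pow_mulVec_of_mulVec_eq_smul (inv_mulVec_of_mulVec_eq_smul hΩ_unit hδ.ne' ?_) k
    rw [hΩ]
    exact mul_transpose_add_smul_one_mulVec_eq hAb δ
  refine ⟨?_, ?_, ?_⟩
  · rw [Matrix.mul_assoc, hΨk, ← Matrix.mul_assoc, hΨ, Matrix.one_mul]
  · rw [hΨk, ← vecMul_vecMul, ← mulVec_transpose Ψ, hΨb, zero_vecMul]
  · rw [hbk, dotProduct_smul, hb, smul_eq_mul, mul_one]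
end

section
/- Let S be an m×m symmetric positive semidefinite matrix with eigenvalues γ₁ ≥ … ≥ γ_m, and let 1 ≤ q < m. Let U_q be the m×q matrix of eigenvectors for the top q eigenvalues, Γ_q = diag(γ₁,…,γ_q), δ̂ = (1/(m−q))·Σ_{j=q+1}^m γ_j, and Â = U_q (Γ_q − δ̂ I_q)^{1/2} (assuming γ_q ≥ δ̂). Then the squared Frobenius approximation error satisfies ‖S − Â Âᵀ − δ̂ I_m‖_F² = Σ_{i=q+1}^m γ_i² − (1/(m−q))·(Σ_{i=q+1}^m γ_i)². -/
open Matrix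

theorem stmt11 {m q : ℕ} (hq : q < m)
    (S U : Matrix (Fin m) (Fin m) ℝ) (γ : Fin m → ℝ)
    (hU : Uᵀ * U = 1) (hS : S = U * Matrix.diagonal γ * Uᵀ)
    (hmono : Antitone γ) (hnonneg : ∀ i, 0 ≤ γ i)
    (δhat : ℝ)
    (hδhat : δhat = (∑ j ∈ Finset.univ.filter (fun j : Fin m => q ≤ (j : ℕ)), γ j)
        / ((m : ℝ) - q))
    (hδle : ∀ j : Fin m, (j : ℕ) < q → δhat ≤ γ j)
    (Ahat : Matrix (Fin m) (Fin q) ℝ)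
    (hAhat : Ahat = Matrix.of fun i j =>
        U i (Fin.castLE hq.le j) * Real.sqrt (γ (Fin.castLE hq.le j) - δhat)) :
    ∑ i, ∑ j, (((S - Ahat * Ahatᵀ - δhat • (1 : Matrix (Fin m) (Fin m) ℝ)) i j)) ^ 2
      = (∑ j ∈ Finset.univ.filter (fun j : Fin m => q ≤ (j : ℕ)), (γ j) ^ 2)
        - (∑ j ∈ Finset.univ.filter (fun j : Fin m => q ≤ (j : ℕ)), γ j) ^ 2
            / ((m : ℝ) - q) := by
  have hUU : U * Uᵀ = 1 := by rwa [mul_eq_one_comm] at hU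
  set g : Fin m → ℝ := fun j => if (j : ℕ) < q then 0 else γ j - δhat with hg
  -- the image of Fin.castLE as a finset
  have hmap : (Finset.univ.map (Fin.castLEEmb hq.le)) =
      Finset.univ.filter (fun j : Fin m => (j : ℕ) < q) := by
    ext j
    simp only [Finset.mem_map, Finset.mem_univ, true_and, Finset.mem_filter,
      Fin.castLEEmb_apply]
    constructor
    · rintro ⟨i, rfl⟩; exact i.isLt
    · rintro h; exact ⟨⟨(j : ℕ), h⟩, rfl⟩
  -- Ahat * Ahatᵀ
  have hf : Ahat * Ahatᵀ = U * Matrix.diagonal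
      (fun j : Fin m => if (j : ℕ) < q then γ j - δhat else 0) * Uᵀ := by
    ext i k
    rw [Matrix.mul_apply, Matrix.mul_apply]
    have : ∀ j : Fin m, (U * Matrix.diagonal
        (fun j : Fin m => if (j : ℕ) < q then γ j - δhat else 0)) i j * Uᵀ j k
        = (if (j : ℕ) < q then U i j * (γ j - δhat) * U k j else 0) := by
      intro j
      rw [Matrix.mul_diagonal, Matrix.transpose_apply]
      split <;> ring
    simp only [this]
    rw [← Finset.sum_filter, ← hmap, Finset.sum_map]
    apply Finset.sum_congr rfl
    intro j _
    have hsq : Real.sqrt (γ (Fin.castLE hq.le j) - δhat) *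
        Real.sqrt (γ (Fin.castLE hq.le j) - δhat) = γ (Fin.castLE hq.le j) - δhat :=
      Real.mul_self_sqrt (by linarith [hδle (Fin.castLE hq.le j) j.isLt])
    simp only [hAhat, Matrix.of_apply, Matrix.transpose_apply, Fin.castLEEmb_apply]
    linear_combination U i (Fin.castLE hq.le j) * U k (Fin.castLE hq.le j) * hsq
  -- the residual matrix
  have hM : S - Ahat * Ahatᵀ - δhat • (1 : Matrix (Fin m) (Fin m) ℝ)
      = U * Matrix.diagonal g * Uᵀ := by
    rw [hS, hf]
    have hd : Matrix.diagonal (fun _ : Fin m => δhat) = δhat • (1 : Matrix (Fin m) (Fin m) ℝ) := by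
      ext i j
      rcases eq_or_ne i j with rfl | h
      · simp
      · simp [Matrix.diagonal_apply_ne _ h, Matrix.one_apply_ne h]
    have h1 : δhat • (1 : Matrix (Fin m) (Fin m) ℝ)
        = U * Matrix.diagonal (fun _ : Fin m => δhat) * Uᵀ := by
      rw [hd, Matrix.mul_smul, Matrix.mul_one, Matrix.smul_mul, hUU]
    rw [h1, ← Matrix.sub_mul, ← Matrix.mul_sub, ← Matrix.sub_mul, ← Matrix.mul_sub]
    congr 2
    ext i j
    rcases eq_or_ne i j with rfl | h
    · simp only [Matrix.sub_apply, Matrix.diagonal_apply_eq, hg]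
      split <;> ring
    · simp [Matrix.sub_apply, Matrix.diagonal_apply_ne _ h]
  rw [hM]
  -- Frobenius sum as trace
  have hMtM : (U * Matrix.diagonal g * Uᵀ)ᵀ * (U * Matrix.diagonal g * Uᵀ)
      = U * Matrix.diagonal (fun j => g j ^ 2) * Uᵀ := by
    rw [Matrix.transpose_mul, Matrix.transpose_mul, Matrix.transpose_transpose,
      Matrix.diagonal_transpose]
    calc Uᵀᵀ * (Matrix.diagonal g * Uᵀ) * (U * Matrix.diagonal g * Uᵀ)
        = U * (Matrix.diagonal g * ((Uᵀ * U) * (Matrix.diagonal g * Uᵀ))) := by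
          rw [Matrix.transpose_transpose]; noncomm_ring
      _ = U * Matrix.diagonal (fun j => g j ^ 2) * Uᵀ := by
          rw [hU, one_mul, ← Matrix.mul_assoc (Matrix.diagonal g),
            Matrix.diagonal_mul_diagonal, ← Matrix.mul_assoc]
          congr 2
          ext j
          ring
  have htr : ∑ i, ∑ j, ((U * Matrix.diagonal g * Uᵀ) i j) ^ 2 = ∑ j, g j ^ 2 := by
    have : ∑ i, ∑ j, ((U * Matrix.diagonal g * Uᵀ) i j) ^ 2
        = Matrix.trace ((U * Matrix.diagonal g * Uᵀ)ᵀ * (U * Matrix.diagonal g * Uᵀ)) := by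
      rw [Matrix.trace]
      rw [Finset.sum_comm]
      apply Finset.sum_congr rfl
      intro j _
      rw [Matrix.diag_apply, Matrix.mul_apply]
      apply Finset.sum_congr rfl
      intro i _
      rw [Matrix.transpose_apply]
      ring
    rw [this, hMtM, Matrix.trace_mul_cycle, hU, one_mul, Matrix.trace_diagonal]
  rw [htr]
  -- split the sum over g
  have hsplit : ∑ j, g j ^ 2
      = ∑ j ∈ Finset.univ.filter (fun j : Fin m => q ≤ (j : ℕ)), (γ j - δhat) ^ 2 := by
    rw [← Finset.sum_filter_add_sum_filter_not Finset.univ (fun j : Fin m => q ≤ (j : ℕ))]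
    have h0 : ∑ j ∈ Finset.univ.filter (fun j : Fin m => ¬ q ≤ (j : ℕ)), g j ^ 2 = 0 := by
      apply Finset.sum_eq_zero
      intro j hj
      simp only [Finset.mem_filter, not_le] at hj
      simp [hg, hj.2]
    rw [h0, add_zero]
    apply Finset.sum_congr rfl
    intro j hj
    simp only [Finset.mem_filter] at hj
    simp [hg, not_lt.mpr hj.2]
  rw [hsplit]
  -- cardinality of the filter
  have hcard : (Finset.univ.filter (fun j : Fin m => q ≤ (j : ℕ))).card = m - q := by
    have h1 : (Finset.univ.filter (fun j : Fin m => (j : ℕ) < q)).card = q := by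
      rw [← hmap, Finset.card_map, Finset.card_univ, Fintype.card_fin]
    have h2 := Finset.card_filter_add_card_filter_not
      (s := (Finset.univ : Finset (Fin m))) (p := fun j : Fin m => (j : ℕ) < q)
    simp only [Finset.card_univ, Fintype.card_fin, not_lt] at h2
    omega
  -- final algebra
  set T := ∑ j ∈ Finset.univ.filter (fun j : Fin m => q ≤ (j : ℕ)), γ j with hT
  have hn : ((m : ℝ) - q) ≠ 0 := by
    have : (q : ℝ) < m := by exact_mod_cast hq
    linarith
  have hexp : ∑ j ∈ Finset.univ.filter (fun j : Fin m => q ≤ (j : ℕ)), (γ j - δhat) ^ 2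
      = (∑ j ∈ Finset.univ.filter (fun j : Fin m => q ≤ (j : ℕ)), (γ j) ^ 2)
        - 2 * δhat * T + ((m : ℝ) - q) * δhat ^ 2 := by
    have : ∀ j ∈ Finset.univ.filter (fun j : Fin m => q ≤ (j : ℕ)),
        (γ j - δhat) ^ 2 = (γ j) ^ 2 - 2 * δhat * γ j + δhat ^ 2 := by
      intro j _; ring
    rw [Finset.sum_congr rfl this, Finset.sum_add_distrib, Finset.sum_sub_distrib,
      Finset.sum_const, hcard, ← Finset.mul_sum, ← hT]
    have : ((m - q : ℕ) : ℝ) = (m : ℝ) - q := by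
      rw [Nat.cast_sub hq.le]
    rw [nsmul_eq_mul, this]
  rw [hexp, hδhat]
  field_simp
  ring
end

section
/- For any symmetric positive semidefinite m×m matrix S with eigenvalues γ₁ ≥ … ≥ γ_m and any q < m: inf over rank-≤q matrices Y ∈ ℝ^{m×q} of ‖S − Y Yᵀ‖_F² equals Σ_{i=q+1}^m γ_i², and the infimum over pairs (A, δ) with A ∈ ℝ^{m×q}, δ ≥ 0 of ‖S − A Aᵀ − δ I_m‖_F² is strictly smaller than Σ_{i=q+1}^m γ_i² whenever γ_{q+1} > 0; i.e., the ridge approximation is at least as tight as the best rank-q PSD approximation. -/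
/-!
Conjugating by `U` reduces everything to `S = diagonal γ`. If `P = Y Yᵀ` has rank at most `q`,
an orthonormal eigenbasis of `P` contains at least `m - q` kernel vectors `v`; on them
`(diagonal γ - P) v = diagonal γ v`, so these columns alone contribute `∑ₖ γₖ² dₖ` to the
Frobenius norm, with weights `dₖ ∈ [0, 1]` of total mass at least `m - q`. Such a weighted sum is
smallest when the mass sits on the `m - q` smallest `γₖ²`, which gives `∑_{k ≥ q} γₖ²`; keeping
the top `q` eigenvalues attains it. For the ridge family, lowering the top `q` eigenvalues by the
mean `δ` of the tail ones and adding `δ I` leaves the residual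
`∑_{k ≥ q} (γₖ - δ)² = ∑_{k ≥ q} γₖ² - (∑_{k ≥ q} γₖ)² / (m - q)`, strictly smaller once `γ_q > 0`.
-/

open Matrix Finset

namespace RidgeApproximation

section FrobSq

variable {n k l : Type*} [Fintype n] [Fintype k] [Fintype l]

def frobSq (M : Matrix n k ℝ) : ℝ := ∑ i, ∑ j, M i j ^ 2

lemma frobSq_nonneg (M : Matrix n k ℝ) : 0 ≤ frobSq M := by
  unfold frobSq; positivity

lemma frobSq_transpose (M : Matrix n k ℝ) : frobSq Mᵀ = frobSq M :=
  Finset.sum_comm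

lemma frobSq_eq_trace_mul_transpose (M : Matrix n k ℝ) : frobSq M = trace (M * Mᵀ) := by
  simp [frobSq, trace, mul_apply, sq]

lemma frobSq_mul_of_mul_transpose_eq_one [DecidableEq k] (M : Matrix n k ℝ) {V : Matrix k l ℝ}
    (hV : V * Vᵀ = 1) : frobSq (M * V) = frobSq M := by
  rw [frobSq_eq_trace_mul_transpose, frobSq_eq_trace_mul_transpose, transpose_mul,
    Matrix.mul_assoc, ← Matrix.mul_assoc V, hV, Matrix.one_mul]

lemma frobSq_conj [DecidableEq k] (M : Matrix k k ℝ) {V : Matrix n k ℝ} (hV : Vᵀ * V = 1) :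
    frobSq (V * M * Vᵀ) = frobSq M := by
  rw [frobSq_mul_of_mul_transpose_eq_one _ (by rwa [transpose_transpose]), ← frobSq_transpose,
    transpose_mul, frobSq_mul_of_mul_transpose_eq_one _ hV, frobSq_transpose]

lemma frobSq_diagonal [DecidableEq n] (w : n → ℝ) : frobSq (diagonal w) = ∑ i, w i ^ 2 := by
  simp [frobSq, diagonal_apply]

lemma sum_sum_sq_le_frobSq (M : Matrix n k ℝ) (E : Finset k) :
    ∑ j ∈ E, ∑ i, M i j ^ 2 ≤ frobSq M := by
  rw [← frobSq_transpose]
  exact sum_le_univ_sum_of_nonneg fun j => by positivity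

lemma frobSq_conj_sub [DecidableEq n] {U : Matrix n n ℝ} (hU : Uᵀ * U = 1) (D X : Matrix n n ℝ) :
    frobSq (U * D * Uᵀ - X) = frobSq (D - Uᵀ * X * U) := by
  have hUUt : U * Uᵀ = 1 := mul_eq_one_comm.mp hU
  rw [← frobSq_conj (D - Uᵀ * X * U) hU]
  congr 1
  simp only [Matrix.mul_sub, Matrix.sub_mul, ← Matrix.mul_assoc, hUUt, Matrix.one_mul]
  rw [Matrix.mul_assoc X, hUUt, Matrix.mul_one]

end FrobSq

lemma sum_le_sum_mul_of_card_le_sum {ι : Type*} [Fintype ι] (T : Finset ι) (g d : ι → ℝ) {t : ℝ}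
    (ht : 0 ≤ t) (hgT : ∀ k ∈ T, g k ≤ t) (hgTc : ∀ k ∉ T, t ≤ g k)
    (hd0 : ∀ k, 0 ≤ d k) (hd1 : ∀ k, d k ≤ 1) (hcard : (#T : ℝ) ≤ ∑ k, d k) :
    ∑ k ∈ T, g k ≤ ∑ k, g k * d k := by
  classical
  set e : ι → ℝ := fun k => (if k ∈ T then 1 else 0) - d k
  have hsum_g : ∑ k, e k * g k = ∑ k ∈ T, g k - ∑ k, g k * d k := by
    simp only [e, sub_mul, sum_sub_distrib, ite_mul, one_mul, zero_mul, sum_ite_mem, univ_inter,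
      mul_comm (d _)]
  have hsum_t : ∑ k, e k * t = (#T - ∑ k, d k) * t := by
    simp [e, sub_mul, sum_sub_distrib, ← sum_mul]
  have hle : ∑ k, e k * g k ≤ ∑ k, e k * t := by
    refine sum_le_sum fun k _ => ?_
    by_cases hk : k ∈ T
    · have : 0 ≤ e k := by simp [e, hk, hd1 k]
      exact mul_le_mul_of_nonneg_left (hgT k hk) this
    · have : e k ≤ 0 := by simp [e, hk, hd0 k]
      exact mul_le_mul_of_nonpos_left (hgTc k hk) this
  nlinarith

lemma card_filter_le_val (m q : ℕ) : #{j : Fin m | q ≤ (j : ℕ)} = m - q := by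
  have h := card_filter_add_card_filter_not (s := (univ : Finset (Fin m))) (fun j => (j : ℕ) < q)
  simp only [not_lt, Fin.card_filter_val_lt, card_univ, Fintype.card_fin] at h
  omega

section Spectral

variable {n : Type*} [Fintype n] [DecidableEq n] {P : Matrix n n ℝ} (hP : P.IsHermitian)
include hP

lemma transpose_eigenvectorUnitary_mul_self :
    (hP.eigenvectorUnitary : Matrix n n ℝ)ᵀ * hP.eigenvectorUnitary = 1 := by
  simpa only [star_eq_conjTranspose, conjTranspose_eq_transpose_of_trivial] using
    Unitary.coe_star_mul_self hP.eigenvectorUnitary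

lemma eigenvectorUnitary_mul_transpose_self :
    (hP.eigenvectorUnitary : Matrix n n ℝ) * (hP.eigenvectorUnitary : Matrix n n ℝ)ᵀ = 1 :=
  mul_eq_one_comm.mp (transpose_eigenvectorUnitary_mul_self hP)

lemma mul_eigenvectorUnitary_apply (i j : n) :
    (P * hP.eigenvectorUnitary) i j = hP.eigenvalues j * hP.eigenvectorUnitary i j := by
  simpa [mulVec, dotProduct, mul_apply] using congrFun (hP.mulVec_eigenvectorBasis j) i

lemma card_eigenvalues_eq_zero :
    #{j | hP.eigenvalues j = 0} = Fintype.card n - P.rank := by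
  rw [hP.rank_eq_card_non_zero_eigs, Fintype.card_subtype, ← card_univ,
    ← card_filter_add_card_filter_not (s := univ) (fun j => hP.eigenvalues j = 0)]
  simp

end Spectral

lemma sum_sq_mul_sum_sq_le_frobSq_diagonal_sub {n : Type*} [Fintype n] [DecidableEq n]
    (D : n → ℝ) {P V : Matrix n n ℝ} (hV : V * Vᵀ = 1) {E : Finset n}
    (hE : ∀ i, ∀ j ∈ E, (P * V) i j = 0) :
    ∑ k, D k ^ 2 * ∑ j ∈ E, V k j ^ 2 ≤ frobSq (diagonal D - P) := by
  have hcol : ∀ j ∈ E, ∀ i, ((diagonal D - P) * V) i j = D i * V i j := fun j hj i => by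
    rw [Matrix.sub_mul, Matrix.sub_apply, hE i j hj, sub_zero, diagonal_mul]
  calc ∑ k, D k ^ 2 * ∑ j ∈ E, V k j ^ 2
      = ∑ j ∈ E, ∑ i, ((diagonal D - P) * V) i j ^ 2 := by
        simp_rw [mul_sum]
        rw [sum_comm]
        refine sum_congr rfl fun j hj => sum_congr rfl fun i _ => ?_
        rw [hcol j hj i, mul_pow]
    _ ≤ frobSq ((diagonal D - P) * V) := sum_sum_sq_le_frobSq _ E
    _ = frobSq (diagonal D - P) := frobSq_mul_of_mul_transpose_eq_one _ hV

lemma sum_tail_sq_le_frobSq_diagonal_sub {m q : ℕ} (hq : q < m) {γ : Fin m → ℝ}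
    (hmono : Antitone γ) (hnonneg : ∀ i, 0 ≤ γ i) {P : Matrix (Fin m) (Fin m) ℝ}
    (hP : P.IsHermitian) (hrank : P.rank ≤ q) :
    ∑ j ∈ {j : Fin m | q ≤ (j : ℕ)}, γ j ^ 2 ≤ frobSq (diagonal γ - P) := by
  set V : Matrix (Fin m) (Fin m) ℝ := ↑hP.eigenvectorUnitary
  set E := univ.filter fun j => hP.eigenvalues j = 0
  have hVVt := eigenvectorUnitary_mul_transpose_self hP
  have hVtV := transpose_eigenvectorUnitary_mul_self hP
  have hE : ∀ i, ∀ j ∈ E, (P * V) i j = 0 := fun i j hj => by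
    rw [mul_eigenvectorUnitary_apply hP, (mem_filter.mp hj).2, zero_mul]
  have hd1 : ∀ k, ∑ j ∈ E, V k j ^ 2 ≤ 1 := fun k => by
    calc ∑ j ∈ E, V k j ^ 2 ≤ ∑ j, V k j ^ 2 := sum_le_univ_sum_of_nonneg fun j => sq_nonneg _
      _ = 1 := by
        simpa only [mul_apply, transpose_apply, one_apply_eq, sq] using congrFun (congrFun hVVt k) k
  have hdsum : ∑ k, ∑ j ∈ E, V k j ^ 2 = #E := by
    rw [sum_comm, card_eq_sum_ones, Nat.cast_sum, Nat.cast_one]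
    refine sum_congr rfl fun j _ => ?_
    simpa only [mul_apply, transpose_apply, one_apply_eq, sq] using congrFun (congrFun hVtV j) j
  have hcard : (#{j : Fin m | q ≤ (j : ℕ)} : ℝ) ≤ #E := by
    rw [card_filter_le_val, card_eigenvalues_eq_zero hP, Fintype.card_fin]
    exact_mod_cast Nat.sub_le_sub_left hrank m
  refine le_trans ?_ (sum_sq_mul_sum_sq_le_frobSq_diagonal_sub γ hVVt hE)
  refine sum_le_sum_mul_of_card_le_sum _ _ _ (sq_nonneg (γ ⟨q, hq⟩)) (fun k hk => ?_)
    (fun k hk => ?_) (fun k => sum_nonneg fun j _ => sq_nonneg _) hd1 (hdsum ▸ hcard)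
  · exact pow_le_pow_left₀ (hnonneg k) (hmono (Fin.le_def.mpr (mem_filter.mp hk).2)) 2
  · have : k ≤ ⟨q, hq⟩ := Fin.le_def.mpr (show (k : ℕ) ≤ q by simp at hk; omega)
    exact pow_le_pow_left₀ (hnonneg _) (hmono this) 2

noncomputable def sqrtEmbed {m : ℕ} (q : ℕ) (w : Fin m → ℝ) : Matrix (Fin m) (Fin q) ℝ :=
  of fun i k => if (i : ℕ) = k then √(w i) else 0

lemma sqrtEmbed_mul_transpose {m q : ℕ} {w : Fin m → ℝ}
    (hw : ∀ i : Fin m, (i : ℕ) < q → 0 ≤ w i) :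
    sqrtEmbed q w * (sqrtEmbed q w)ᵀ =
      diagonal fun i : Fin m => if (i : ℕ) < q then w i else 0 := by
  ext i j
  simp only [sqrtEmbed, mul_apply, transpose_apply, of_apply, diagonal_apply]
  rw [Fin.sum_univ_eq_sum_range (fun k : ℕ => (if (i : ℕ) = k then √(w i) else 0) *
    (if (j : ℕ) = k then √(w j) else 0)) q]
  simp only [ite_mul, zero_mul, mul_ite, mul_zero, sum_ite_eq, mem_range]
  rcases eq_or_ne i j with rfl | hij
  · by_cases hi : (i : ℕ) < q
    · simpa [hi] using Real.mul_self_sqrt (hw i hi)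
    · simp [hi]
  · simp [hij, Fin.val_ne_of_ne hij]

lemma frobSq_diagonal_sub_sqrtEmbed_sub_smul {m q : ℕ} {γ : Fin m → ℝ} {δ : ℝ}
    (hδ : ∀ i : Fin m, (i : ℕ) < q → δ ≤ γ i) :
    frobSq (diagonal γ - sqrtEmbed q (fun i => γ i - δ) * (sqrtEmbed q fun i => γ i - δ)ᵀ - δ • 1)
      = ∑ j ∈ {j : Fin m | q ≤ (j : ℕ)}, (γ j - δ) ^ 2 := by
  rw [sqrtEmbed_mul_transpose fun i hi => sub_nonneg.mpr (hδ i hi), smul_one_eq_diagonal,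
    diagonal_sub, diagonal_sub, frobSq_diagonal, sum_filter]
  refine sum_congr rfl fun i _ => ?_
  by_cases hi : (i : ℕ) < q
  · simp [hi]
  · simp [hi, not_lt.mp hi]

lemma frobSq_conj_sub_mul_transpose_sub_smul {n k : Type*} [Fintype n] [Fintype k]
    [DecidableEq n] {U : Matrix n n ℝ} (hU : Uᵀ * U = 1) (D : Matrix n n ℝ) (B : Matrix n k ℝ)
    (δ : ℝ) :
    frobSq (U * D * Uᵀ - (U * B) * (U * B)ᵀ - δ • 1) = frobSq (D - B * Bᵀ - δ • 1) := by
  rw [sub_sub, frobSq_conj_sub hU, sub_sub]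
  congr 2
  simp only [Matrix.mul_add, Matrix.add_mul, transpose_mul, Matrix.mul_smul, Matrix.smul_mul,
    Matrix.mul_one, hU, ← Matrix.mul_assoc, Matrix.one_mul]
  rw [Matrix.mul_assoc _ Uᵀ U, hU, Matrix.mul_one]

lemma sum_sub_average_sq {ι : Type*} {T : Finset ι} (hT : T.Nonempty) (x : ι → ℝ) :
    ∑ j ∈ T, (x j - (∑ i ∈ T, x i) / #T) ^ 2 = ∑ j ∈ T, x j ^ 2 - (∑ j ∈ T, x j) ^ 2 / #T := by
  have hcard : (#T : ℝ) ≠ 0 := Nat.cast_ne_zero.mpr hT.card_ne_zero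
  simp only [sub_sq, sum_add_distrib, sum_sub_distrib, ← sum_mul, ← mul_sum, sum_const,
    nsmul_eq_mul]
  field_simp
  ring

lemma sum_tail_sq_le_frobSq_conj_sub_mul_transpose {m q : ℕ} (hq : q < m)
    {U : Matrix (Fin m) (Fin m) ℝ} (hU : Uᵀ * U = 1) {γ : Fin m → ℝ} (hmono : Antitone γ)
    (hnonneg : ∀ i, 0 ≤ γ i) (Y : Matrix (Fin m) (Fin q) ℝ) :
    ∑ j ∈ {j : Fin m | q ≤ (j : ℕ)}, γ j ^ 2 ≤ frobSq (U * diagonal γ * Uᵀ - Y * Yᵀ) := by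
  have hconj : Uᵀ * (Y * Yᵀ) * U = (Uᵀ * Y) * (Uᵀ * Y)ᵀ := by
    simp only [transpose_mul, transpose_transpose, Matrix.mul_assoc]
  have hherm : ((Uᵀ * Y) * (Uᵀ * Y)ᵀ).IsHermitian := by
    simpa using isHermitian_mul_conjTranspose_self (Uᵀ * Y)
  rw [frobSq_conj_sub hU, hconj]
  exact sum_tail_sq_le_frobSq_diagonal_sub hq hmono hnonneg hherm
    ((rank_self_mul_transpose _).trans_le (rank_le_width _))

end RidgeApproximation

open RidgeApproximation in
theorem stmt13 {m q : ℕ} (hq : q < m)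
    (S U : Matrix (Fin m) (Fin m) ℝ) (γ : Fin m → ℝ)
    (hU : Uᵀ * U = 1) (hS : S = U * Matrix.diagonal γ * Uᵀ)
    (hmono : Antitone γ) (hnonneg : ∀ i, 0 ≤ γ i) :
    (⨅ Y : Matrix (Fin m) (Fin q) ℝ, ∑ i, ∑ j, (((S - Y * Yᵀ : Matrix (Fin m) (Fin m) ℝ) i j)) ^ 2)
      = ∑ j ∈ Finset.univ.filter (fun j : Fin m => q ≤ (j : ℕ)), (γ j) ^ 2 ∧
    (0 < γ ⟨q, hq⟩ →
      (⨅ p : Matrix (Fin m) (Fin q) ℝ × {x : ℝ // 0 ≤ x},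
          ∑ i, ∑ j, (((S - p.1 * p.1ᵀ - (p.2 : ℝ) • (1 : Matrix (Fin m) (Fin m) ℝ)) i j)) ^ 2)
        < ∑ j ∈ Finset.univ.filter (fun j : Fin m => q ≤ (j : ℕ)), (γ j) ^ 2) := by
  show (⨅ Y : Matrix (Fin m) (Fin q) ℝ, frobSq (S - Y * Yᵀ)) = _ ∧
    (_ → (⨅ p : Matrix (Fin m) (Fin q) ℝ × {x : ℝ // 0 ≤ x},
      frobSq (S - p.1 * p.1ᵀ - (p.2 : ℝ) • 1)) < _)
  subst hS
  set T : Finset (Fin m) := {j | q ≤ (j : ℕ)}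
  have hqT : (⟨q, hq⟩ : Fin m) ∈ T := by simp [T]
  have ridge (δ : ℝ) (hδ : ∀ i : Fin m, (i : ℕ) < q → δ ≤ γ i) :
      frobSq (U * diagonal γ * Uᵀ - (U * sqrtEmbed q fun i => γ i - δ) *
        (U * sqrtEmbed q fun i => γ i - δ)ᵀ - δ • 1) = ∑ j ∈ T, (γ j - δ) ^ 2 := by
    rw [frobSq_conj_sub_mul_transpose_sub_smul hU, frobSq_diagonal_sub_sqrtEmbed_sub_smul hδ]
  have bdd {ι : Type} (f : ι → Matrix (Fin m) (Fin m) ℝ) :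
      BddBelow (Set.range fun i => frobSq (f i)) :=
    ⟨0, Set.forall_mem_range.2 fun _ => frobSq_nonneg _⟩
  have lower := sum_tail_sq_le_frobSq_conj_sub_mul_transpose hq hU hmono hnonneg
  refine ⟨le_antisymm ((ciInf_le (bdd _) (U * sqrtEmbed q γ)).trans_eq ?_) (le_ciInf lower),
    fun hpos => ?_⟩
  · simpa using ridge 0 fun i _ => hnonneg i
  set δ := (∑ j ∈ T, γ j) / #T
  have hsum_pos : 0 < ∑ j ∈ T, γ j :=
    hpos.trans_le (single_le_sum (fun j _ => hnonneg j) hqT)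
  have hT_pos : 0 < (#T : ℝ) := by exact_mod_cast card_pos.mpr ⟨_, hqT⟩
  have hδ_le : δ ≤ γ ⟨q, hq⟩ := by
    rw [div_le_iff₀ hT_pos, mul_comm, ← nsmul_eq_mul]
    exact sum_le_card_nsmul _ _ _ fun j hj => hmono (Fin.le_def.mpr (mem_filter.mp hj).2)
  refine (ciInf_le (bdd _) ((U * sqrtEmbed q fun i => γ i - δ), ⟨δ, by positivity⟩)).trans_lt ?_
  calc _ = ∑ j ∈ T, (γ j - δ) ^ 2 := ridge δ fun i hi => hδ_le.trans (hmono (Fin.le_def.mpr hi.le))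
    _ = ∑ j ∈ T, γ j ^ 2 - (∑ j ∈ T, γ j) ^ 2 / #T := sum_sub_average_sq ⟨_, hqT⟩ γ
    _ < ∑ j ∈ T, γ j ^ 2 := sub_lt_self _ (div_pos (pow_pos hsum_pos 2) hT_pos)
end

section
/- Fixed-point characterization: suppose S is m×m symmetric PSD, δ > 0, and A ∈ ℝ^{m×q} of full column rank satisfy S A = A(δ I_q + Aᵀ A). Let Aᵀ A = V Λ Vᵀ be a spectral decomposition with Λ positive definite diagonal. Then the columns of A V Λ^{−1/2} are orthonormal eigenvectors of S with corresponding eigenvalues given by the diagonal of Λ + δ I_q. -/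
/-!
Since `Vᵀ V = 1`, the columns of `B = A V` satisfy `Bᵀ B = Vᵀ (Aᵀ A) V = Λ`, so they are
pairwise orthogonal with squared norms `λᵢ`; the fixed-point equation gives
`S B = A (δ I + V Λ Vᵀ) V = B (Λ + δ I)`, so they are eigenvectors of `S`. Rescaling the columns
by `λᵢ^{-1/2}` normalises them and, diagonal matrices commuting, keeps them eigenvectors.
-/

open Matrix

section Diagonalization

variable {n R : Type*} [Fintype n] [DecidableEq n] [CommRing R]

theorem Matrix.conj_diagonal_mul_of_transpose_mul_self_eq_one {V : Matrix n n R}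
    (hV : Vᵀ * V = 1) (Λ : n → R) : V * diagonal Λ * Vᵀ * V = V * diagonal Λ := by
  rw [Matrix.mul_assoc, hV, Matrix.mul_one]

theorem Matrix.transpose_mul_mul_self_eq_diagonal {m : Type*} [Fintype m]
    {A : Matrix m n R} {V : Matrix n n R} (hV : Vᵀ * V = 1) {Λ : n → R}
    (hA : Aᵀ * A = V * diagonal Λ * Vᵀ) : (A * V)ᵀ * (A * V) = diagonal Λ := by
  calc (A * V)ᵀ * (A * V) = Vᵀ * (Aᵀ * A * V) := by
        simp only [transpose_mul, Matrix.mul_assoc]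
    _ = diagonal Λ := by
        rw [hA, conj_diagonal_mul_of_transpose_mul_self_eq_one hV, ← Matrix.mul_assoc, hV,
          Matrix.one_mul]

theorem Matrix.smul_one_add_conj_diagonal_mul {V : Matrix n n R} (hV : Vᵀ * V = 1)
    (Λ : n → R) (δ : R) :
    (δ • (1 : Matrix n n R) + V * diagonal Λ * Vᵀ) * V = V * diagonal (fun i => Λ i + δ) := by
  have hδ : δ • V = V * diagonal (fun _ => δ) := by
    rw [← smul_one_eq_diagonal, Matrix.mul_smul, Matrix.mul_one]
  rw [Matrix.add_mul, smul_one_mul, conj_diagonal_mul_of_transpose_mul_self_eq_one hV, hδ,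
    ← Matrix.mul_add, diagonal_add, funext fun i => add_comm δ (Λ i)]

end Diagonalization

section ColumnScaling

variable {m n R : Type*} [Fintype m] [Fintype n] [DecidableEq n] [CommRing R]

theorem Matrix.transpose_mul_self_mul_diagonal_eq_one {B : Matrix m n R} {Λ c : n → R}
    (hB : Bᵀ * B = diagonal Λ) (hc : ∀ i, c i * Λ i * c i = 1) :
    (B * diagonal c)ᵀ * (B * diagonal c) = 1 := by
  rw [transpose_mul, diagonal_transpose, Matrix.mul_assoc, ← Matrix.mul_assoc Bᵀ, hB,
    diagonal_mul_diagonal, diagonal_mul_diagonal, ← diagonal_one]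
  exact congrArg diagonal <| funext fun i => (mul_assoc _ _ _).symm.trans (hc i)

theorem Matrix.mul_mul_diagonal_of_mul_eq_mul_diagonal {S : Matrix m m R} {B : Matrix m n R}
    {μ : n → R} (hSB : S * B = B * diagonal μ) (c : n → R) :
    S * (B * diagonal c) = B * diagonal c * diagonal μ := by
  rw [← Matrix.mul_assoc, hSB, Matrix.mul_assoc, Matrix.mul_assoc, diagonal_mul_diagonal,
    diagonal_mul_diagonal, funext fun i => mul_comm (μ i) (c i)]

end ColumnScaling

theorem Real.inv_sqrt_mul_mul_inv_sqrt {x : ℝ} (hx : 0 < x) : (√x)⁻¹ * x * (√x)⁻¹ = 1 := by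
  rw [mul_right_comm, ← mul_inv, Real.mul_self_sqrt hx.le, inv_mul_cancel₀ hx.ne']

theorem stmt14_general {m q : ℕ} (S : Matrix (Fin m) (Fin m) ℝ)
    (A : Matrix (Fin m) (Fin q) ℝ)
    (δ : ℝ)
    (hfix : S * A = A * (δ • (1 : Matrix (Fin q) (Fin q) ℝ) + Aᵀ * A))
    (V : Matrix (Fin q) (Fin q) ℝ) (hV : Vᵀ * V = 1)
    (Λ : Fin q → ℝ) (hΛpos : ∀ i, 0 < Λ i)
    (hdecomp : Aᵀ * A = V * Matrix.diagonal Λ * Vᵀ)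
    (W : Matrix (Fin m) (Fin q) ℝ)
    (hW : W = A * V * Matrix.diagonal (fun i => (Real.sqrt (Λ i))⁻¹)) :
    Wᵀ * W = 1 ∧ S * W = W * Matrix.diagonal (fun i => Λ i + δ) := by
  have hgram : (A * V)ᵀ * (A * V) = diagonal Λ := transpose_mul_mul_self_eq_diagonal hV hdecomp
  have heigen : S * (A * V) = A * V * diagonal (fun i => Λ i + δ) := by
    rw [← Matrix.mul_assoc, hfix, Matrix.mul_assoc, hdecomp,
      smul_one_add_conj_diagonal_mul hV, Matrix.mul_assoc]
  subst hW
  exact ⟨transpose_mul_self_mul_diagonal_eq_one hgram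
      fun i => Real.inv_sqrt_mul_mul_inv_sqrt (hΛpos i),
    mul_mul_diagonal_of_mul_eq_mul_diagonal heigen _⟩

theorem stmt14 {m q : ℕ} (S : Matrix (Fin m) (Fin m) ℝ) (hS : S.PosSemidef)
    (A : Matrix (Fin m) (Fin q) ℝ) (hrank : A.rank = q)
    (δ : ℝ) (hδ : 0 < δ)
    (hfix : S * A = A * (δ • (1 : Matrix (Fin q) (Fin q) ℝ) + Aᵀ * A))
    (V : Matrix (Fin q) (Fin q) ℝ) (hV : Vᵀ * V = 1)
    (Λ : Fin q → ℝ) (hΛpos : ∀ i, 0 < Λ i)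
    (hdecomp : Aᵀ * A = V * Matrix.diagonal Λ * Vᵀ)
    (W : Matrix (Fin m) (Fin q) ℝ)
    (hW : W = A * V * Matrix.diagonal (fun i => (Real.sqrt (Λ i))⁻¹)) :
    Wᵀ * W = 1 ∧ S * W = W * Matrix.diagonal (fun i => Λ i + δ) :=
  stmt14_general S A δ hfix V hV Λ hΛpos hdecomp W hW
end

section
/- EM preserves the linear constraint: let S be symmetric PSD with Sᵀ b = 0 (equivalently S b = 0) for a vector b. If A_{(t)}ᵀ b = 0 and δ_{(t)} > 0, then A_{(t+1)} := S A_{(t)} (δ_{(t)} I_q + Σ_{(t)}^{−1} A_{(t)}ᵀ S A_{(t)})^{−1}, where Σ_{(t)} = δ_{(t)} I_q + A_{(t)}ᵀ A_{(t)}, satisfies A_{(t+1)}ᵀ b = 0. -/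
open Matrix

theorem stmt15 {m q : ℕ} (S : Matrix (Fin m) (Fin m) ℝ) (hS : S.PosSemidef)
    (b : Fin m → ℝ) (hSb : S.mulVec b = 0)
    (A : Matrix (Fin m) (Fin q) ℝ) (hAb : Aᵀ.mulVec b = 0)
    (δ : ℝ) (hδ : 0 < δ)
    (Sigt : Matrix (Fin q) (Fin q) ℝ)
    (hSig : Sigt = δ • (1 : Matrix (Fin q) (Fin q) ℝ) + Aᵀ * A)
    (A' : Matrix (Fin m) (Fin q) ℝ)
    (hA' : A' = S * A * (δ • (1 : Matrix (Fin q) (Fin q) ℝ)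
        + Sigt⁻¹ * (Aᵀ * S * A))⁻¹) :
    A'ᵀ.mulVec b = 0 := by
  subst hA'
  have hST : Sᵀ = S := by
    have := hS.1.eq
    simpa using this
  rw [transpose_mul, transpose_mul, ← mulVec_mulVec, ← mulVec_mulVec,
    hST, hSb, mulVec_zero, mulVec_zero]
end

section
/- EM preserves full rank: let S be an m×m symmetric PSD matrix and A_{(0)} ∈ ℝ^{m×q} with rank(A_{(0)}) = q and range(A_{(0)}) ⊆ range(S). Then Z := S A_{(0)} has rank q. Consequently, by induction, every iterate A_{(t)} produced by the EM update A_{(t+1)} = S A_{(t)} (δ_{(t)} I_q + Σ_{(t)}^{−1} A_{(t)}ᵀ S A_{(t)})^{−1} (with the indicated matrices invertible) has full column rank q. -/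
open Matrix

lemma inj_of_rank_eq {m q : ℕ} (A : Matrix (Fin m) (Fin q) ℝ) (h : A.rank = q) :
    Function.Injective A.mulVecLin := by
  rw [← LinearMap.ker_eq_bot]
  have h1 := A.mulVecLin.finrank_range_add_finrank_ker
  rw [show Module.finrank ℝ (LinearMap.range A.mulVecLin) = A.rank from rfl, h] at h1
  simp only [Module.finrank_fintype_fun_eq_card, Fintype.card_fin] at h1
  have : Module.finrank ℝ (LinearMap.ker A.mulVecLin) = 0 := by omega
  exact Submodule.finrank_eq_zero.mp this

lemma key {m q : ℕ} (S : Matrix (Fin m) (Fin m) ℝ) (hS : S.PosSemidef)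
    (A : Matrix (Fin m) (Fin q) ℝ) (h : A.rank = q)
    (hr : LinearMap.range A.mulVecLin ≤ LinearMap.range S.mulVecLin) :
    (S * A).rank = q := by
  have hinj : Function.Injective (S * A).mulVecLin := by
    rw [← LinearMap.ker_eq_bot, LinearMap.ker_eq_bot']
    intro x hx
    rw [mulVecLin_mul] at hx
    have hv : S *ᵥ (A *ᵥ x) = 0 := hx
    obtain ⟨w, hw⟩ := hr ⟨x, rfl⟩
    have hx0 : A *ᵥ x = 0 := by
      have hd : (A *ᵥ x) ⬝ᵥ (A *ᵥ x) = 0 := by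
        calc (A *ᵥ x) ⬝ᵥ (A *ᵥ x) = (S *ᵥ w) ⬝ᵥ (A *ᵥ x) := by
              rw [show S *ᵥ w = S.mulVecLin w from rfl, hw, mulVecLin_apply]
          _ = w ⬝ᵥ (Sᵀ *ᵥ (A *ᵥ x)) := by
              rw [dotProduct_comm, dotProduct_mulVec, mulVec_transpose, dotProduct_comm]
          _ = 0 := by
              rw [show Sᵀ = S from by simpa using hS.1.eq, hv, dotProduct_zero]
      exact dotProduct_self_eq_zero.mp hd
    have := inj_of_rank_eq A h
    rw [← LinearMap.ker_eq_bot, LinearMap.ker_eq_bot'] at this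
    exact this x hx0
  have h2 := LinearMap.finrank_range_of_inj hinj
  rw [show (S*A).rank = Module.finrank ℝ (LinearMap.range (S*A).mulVecLin) from rfl, h2]
  simp

theorem stmt16 {m q : ℕ} (S : Matrix (Fin m) (Fin m) ℝ) (hS : S.PosSemidef)
    (A : ℕ → Matrix (Fin m) (Fin q) ℝ) (δ : ℕ → ℝ) (hδ : ∀ t, 0 < δ t)
    (hrank0 : (A 0).rank = q)
    (hrange0 : LinearMap.range (A 0).mulVecLin ≤ LinearMap.range S.mulVecLin)
    (hinv : ∀ t, IsUnit (δ t • (1 : Matrix (Fin q) (Fin q) ℝ)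
        + (δ t • (1 : Matrix (Fin q) (Fin q) ℝ) + (A t)ᵀ * A t)⁻¹ * ((A t)ᵀ * S * A t)))
    (hrec : ∀ t, A (t + 1) = S * A t * (δ t • (1 : Matrix (Fin q) (Fin q) ℝ)
        + (δ t • (1 : Matrix (Fin q) (Fin q) ℝ) + (A t)ᵀ * A t)⁻¹ * ((A t)ᵀ * S * A t))⁻¹) :
    (S * A 0).rank = q ∧ ∀ t, (A t).rank = q := by
  have main : ∀ t, (A t).rank = q ∧
      LinearMap.range (A t).mulVecLin ≤ LinearMap.range S.mulVecLin := by
    intro t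
    induction t with
    | zero => exact ⟨hrank0, hrange0⟩
    | succ t ih =>
      have hdet : IsUnit (δ t • (1 : Matrix (Fin q) (Fin q) ℝ)
          + (δ t • (1 : Matrix (Fin q) (Fin q) ℝ) + (A t)ᵀ * A t)⁻¹ * ((A t)ᵀ * S * A t))⁻¹.det := by
        exact Matrix.isUnit_nonsing_inv_det _ ((Matrix.isUnit_iff_isUnit_det _).mp (hinv t))
      constructor
      · rw [hrec t, Matrix.rank_mul_eq_left_of_isUnit_det _ _ hdet]
        exact key S hS (A t) ih.1 ih.2
      · rw [hrec t]
        intro v hv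
        obtain ⟨x, hx⟩ := hv
        refine ⟨(A t * (δ t • (1:Matrix (Fin q) (Fin q) ℝ) + (δ t • (1:Matrix (Fin q) (Fin q) ℝ) + (A t)ᵀ * A t)⁻¹ * ((A t)ᵀ * S * A t))⁻¹) *ᵥ x, ?_⟩
        rw [← hx]
        simp [mulVecLin_mul, Matrix.mul_assoc]
  refine ⟨key S hS (A 0) hrank0 hrange0, fun t => (main t).1⟩
end

section
/- Positivity of the EM ridge estimate: let S be symmetric PSD, A ∈ ℝ^{m×q}, δ > 0, and Σ = δ I_q + Aᵀ A. Suppose range(A) ⊆ range(S). Then B := S − S A (δ Σ + Aᵀ S A)⁻¹ Aᵀ S is the Moore–Penrose pseudoinverse of S⁺ + δ⁻¹ A Σ⁻¹ Aᵀ; in particular B is positive semidefinite, so tr(B) ≥ 0 and the updated ridge parameter δ' = tr(B)/m is nonnegative. -/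
/-!
Put `X := S⁺ + δ⁻¹ A Σ⁻¹ Aᵀ`. A Woodbury-type computation, in which the range hypothesis enters
as `S⁺ S A = A`, gives `X B = S⁺ S`, the orthogonal projection onto the range of `S`.
As `X`, `B` and `S⁺ S` are symmetric, this projection fixes `X` from the left and `B` from the
right, which yields all four Penrose equations. Finally `X` is positive semidefinite (as `S⁺` is),
so `B = Bᵀ X B` is too.
-/

open Matrix

/-- `Y` is the Moore–Penrose pseudoinverse of `X`. -/
def IsMoorePenrose {n : ℕ} (X Y : Matrix (Fin n) (Fin n) ℝ) : Prop :=
  X * Y * X = X ∧ Y * X * Y = Y ∧ (X * Y)ᵀ = X * Y ∧ (Y * X)ᵀ = Y * X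

theorem Matrix.IsHermitian.transpose_eq {α n : Type*} [Star α] [TrivialStar α] {A : Matrix n n α}
    (h : A.IsHermitian) : Aᵀ = A :=
  (isHermitian_iff_isSymm.1 h).eq

namespace IsMoorePenrose

variable {n : ℕ} {X Y Z : Matrix (Fin n) (Fin n) ℝ}

theorem transpose (h : IsMoorePenrose X Y) : IsMoorePenrose Xᵀ Yᵀ := by
  obtain ⟨h₁, h₂, h₃, h₄⟩ := h
  refine ⟨?_, ?_, ?_, ?_⟩
  · simpa only [transpose_mul, Matrix.mul_assoc] using congrArg Matrix.transpose h₁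
  · simpa only [transpose_mul, Matrix.mul_assoc] using congrArg Matrix.transpose h₂
  · rw [← transpose_mul, h₄, h₄]
  · rw [← transpose_mul, h₃, h₃]

theorem unique (hY : IsMoorePenrose X Y) (hZ : IsMoorePenrose X Z) : Y = Z := by
  obtain ⟨y₁, y₂, y₃, y₄⟩ := hY
  obtain ⟨z₁, z₂, z₃, z₄⟩ := hZ
  have hXY : X * Y = X * Z :=
    calc X * Y = (X * Z * X * Y)ᵀ := by rw [z₁, y₃]
      _ = (X * Y)ᵀ * (X * Z)ᵀ := by simp only [transpose_mul, Matrix.mul_assoc]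
      _ = X * Z := by rw [y₃, z₃, ← Matrix.mul_assoc, y₁]
  have hYX : Y * X = Z * X :=
    calc Y * X = (Y * (X * Z * X))ᵀ := by rw [z₁, y₄]
      _ = (Z * X)ᵀ * (Y * X)ᵀ := by simp only [transpose_mul, Matrix.mul_assoc]
      _ = Z * X := by rw [y₄, z₄, Matrix.mul_assoc, ← Matrix.mul_assoc X, y₁]
  calc Y = Y * X * Y := y₂.symm
    _ = Z * X * Z := by rw [Matrix.mul_assoc, hXY, ← Matrix.mul_assoc, hYX]
    _ = Z := z₂

theorem transpose_eq_self (h : IsMoorePenrose X Y) (hX : Xᵀ = X) : Yᵀ = Y :=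
  (hX ▸ h.transpose).unique h

theorem mul_comm_of_transpose_eq (h : IsMoorePenrose X Y) (hX : Xᵀ = X) : Y * X = X * Y := by
  rw [← h.2.2.2, transpose_mul, hX, h.transpose_eq_self hX]

theorem posSemidef (h : IsMoorePenrose X Y) (hX : X.PosSemidef) : Y.PosSemidef := by
  have hY : Yᴴ = Y := by
    rw [conjTranspose_eq_transpose_of_trivial, h.transpose_eq_self hX.1.transpose_eq]
  simpa only [hY, h.2.1] using hX.conjTranspose_mul_mul_same Y

theorem mul_mul_eq_of_range_le (h : IsMoorePenrose X Y) {ι : Type*} [Fintype ι]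
    {A : Matrix (Fin n) ι ℝ} (hA : LinearMap.range A.mulVecLin ≤ LinearMap.range X.mulVecLin) :
    X * Y * A = A := by
  refine ext_iff_mulVec.2 fun v => ?_
  obtain ⟨w, hw⟩ := hA ⟨v, rfl⟩
  rw [mulVecLin_apply, mulVecLin_apply] at hw
  rw [← mulVec_mulVec, ← hw, mulVec_mulVec, h.1]

theorem of_mul_eq {P : Matrix (Fin n) (Fin n) ℝ} (hX : Xᵀ = X) (hY : Yᵀ = Y) (hXY : X * Y = P)
    (hP : Pᵀ = P) (hPX : P * X = X) (hYP : Y * P = Y) : IsMoorePenrose X Y := by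
  have hYX : Y * X = P := by rw [← hY, ← hX, ← transpose_mul, hXY, hP]
  refine ⟨?_, ?_, ?_, ?_⟩
  · rw [hXY, hPX]
  · rw [Matrix.mul_assoc, hXY, hYP]
  · rw [hXY, hP]
  · rw [hYX, hP]

end IsMoorePenrose

section Woodbury

variable {K m q : Type*} [Field K] [Fintype m] [Fintype q] [DecidableEq q]

theorem inv_mul_sub_mul_inv {C M : Matrix q q K} (δ : K) (hC : IsUnit C.det) (hM : IsUnit M.det) :
    C⁻¹ * (M - δ • C) * M⁻¹ = C⁻¹ - δ • M⁻¹ := by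
  rw [Matrix.mul_sub, Matrix.sub_mul, mul_nonsing_inv_cancel_right _ _ hM, Matrix.mul_smul,
    nonsing_inv_mul _ hC, Matrix.smul_mul, Matrix.one_mul]

/-- A pseudoinverse analogue of the Woodbury identity. -/
theorem woodbury_mul_eq (S P : Matrix m m K) (A : Matrix m q K) (C : Matrix q q K) {δ : K}
    (hδ : δ ≠ 0) (hPSA : P * S * A = A) (hC : IsUnit C.det)
    (hM : IsUnit (δ • C + Aᵀ * S * A).det) :
    (P + δ⁻¹ • (A * C⁻¹ * Aᵀ)) * (S - S * A * (δ • C + Aᵀ * S * A)⁻¹ * Aᵀ * S) = P * S := by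
  set M := δ • C + Aᵀ * S * A
  have hASA : Aᵀ * S * A = M - δ • C := by simp only [M]; abel
  have e₁ : P * (S * A * M⁻¹ * Aᵀ * S) = A * M⁻¹ * Aᵀ * S := by
    simp only [← Matrix.mul_assoc, hPSA]
  have e₂ : A * C⁻¹ * Aᵀ * (S * A * M⁻¹ * Aᵀ * S) = A * C⁻¹ * Aᵀ * S - δ • (A * M⁻¹ * Aᵀ * S) :=
    calc _ = A * (C⁻¹ * (Aᵀ * S * A) * M⁻¹) * (Aᵀ * S) := by simp only [Matrix.mul_assoc]
      _ = A * (C⁻¹ - δ • M⁻¹) * (Aᵀ * S) := by rw [hASA, inv_mul_sub_mul_inv δ hC hM]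
      _ = _ := by simp only [Matrix.mul_sub, Matrix.sub_mul, Matrix.mul_smul, Matrix.smul_mul,
        Matrix.mul_assoc]
  rw [Matrix.add_mul, Matrix.smul_mul, Matrix.mul_sub, Matrix.mul_sub, e₁, e₂, smul_sub, smul_sub,
    smul_smul, inv_mul_cancel₀ hδ, one_smul]
  abel

end Woodbury

theorem stmt17_general {m q : ℕ}
    (S Splus : Matrix (Fin m) (Fin m) ℝ) (hS : S.PosSemidef)
    (hSplus : IsMoorePenrose S Splus)
    (A : Matrix (Fin m) (Fin q) ℝ)
    (hrange : LinearMap.range A.mulVecLin ≤ LinearMap.range S.mulVecLin)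
    (δ : ℝ) (hδ : 0 < δ)
    (Sigm : Matrix (Fin q) (Fin q) ℝ)
    (hSig : Sigm = δ • (1 : Matrix (Fin q) (Fin q) ℝ) + Aᵀ * A)
    (B : Matrix (Fin m) (Fin m) ℝ)
    (hB : B = S - S * A * (δ • Sigm + Aᵀ * S * A)⁻¹ * Aᵀ * S) :
    IsMoorePenrose (Splus + δ⁻¹ • (A * Sigm⁻¹ * Aᵀ)) B ∧
    B.PosSemidef ∧ 0 ≤ B.trace ∧ 0 ≤ B.trace / m := by
  have hPSA : Splus * S * A = A := by
    rw [hSplus.mul_comm_of_transpose_eq hS.1.transpose_eq]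
    exact hSplus.mul_mul_eq_of_range_le hrange
  have hSigm : Sigm.PosDef := hSig ▸ (PosDef.one.smul hδ).add_posSemidef
    (by simpa using posSemidef_conjTranspose_mul_self A)
  have hM : (δ • Sigm + Aᵀ * S * A).PosDef :=
    (hSigm.smul hδ).add_posSemidef (by simpa using hS.conjTranspose_mul_mul_same A)
  set X := Splus + δ⁻¹ • (A * Sigm⁻¹ * Aᵀ)
  have hAinvA : (A * Sigm⁻¹ * Aᵀ).PosSemidef := by
    simpa using hSigm.posSemidef.inv.mul_mul_conjTranspose_same A
  have hX : X.PosSemidef := (hSplus.posSemidef hS).add (hAinvA.smul (inv_nonneg.2 hδ.le))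
  have hXB : X * B = Splus * S := hB ▸ woodbury_mul_eq S Splus A Sigm hδ.ne' hPSA
    ((isUnit_iff_isUnit_det _).1 hSigm.isUnit) ((isUnit_iff_isUnit_det _).1 hM.isUnit)
  have hBsymm : Bᵀ = B := by
    rw [hB]
    simp only [transpose_sub, transpose_mul, transpose_transpose, hS.1.transpose_eq,
      hM.1.inv.transpose_eq]
    simp only [Matrix.mul_assoc]
  have hPX : Splus * S * X = X := by
    rw [Matrix.mul_add, Matrix.mul_smul, hSplus.2.1, ← Matrix.mul_assoc, ← Matrix.mul_assoc, hPSA]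
  have hBP : B * (Splus * S) = B := by
    have hSPS : S * (Splus * S) = S := by rw [← Matrix.mul_assoc, hSplus.1]
    simp only [hB, Matrix.sub_mul, Matrix.mul_assoc, hSPS]
  have hMP : IsMoorePenrose X B := .of_mul_eq hX.1.transpose_eq hBsymm hXB
    hSplus.2.2.2 hPX hBP
  have hBpsd : B.PosSemidef := hMP.posSemidef hX
  exact ⟨hMP, hBpsd, hBpsd.trace_nonneg, div_nonneg hBpsd.trace_nonneg m.cast_nonneg⟩

theorem stmt17 {m q : ℕ} (hm : 0 < m)
    (S Splus : Matrix (Fin m) (Fin m) ℝ) (hS : S.PosSemidef)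
    (hSplus : IsMoorePenrose S Splus)
    (A : Matrix (Fin m) (Fin q) ℝ)
    (hrange : LinearMap.range A.mulVecLin ≤ LinearMap.range S.mulVecLin)
    (δ : ℝ) (hδ : 0 < δ)
    (Sigm : Matrix (Fin q) (Fin q) ℝ)
    (hSig : Sigm = δ • (1 : Matrix (Fin q) (Fin q) ℝ) + Aᵀ * A)
    (B : Matrix (Fin m) (Fin m) ℝ)
    (hB : B = S - S * A * (δ • Sigm + Aᵀ * S * A)⁻¹ * Aᵀ * S) :
    IsMoorePenrose (Splus + δ⁻¹ • (A * Sigm⁻¹ * Aᵀ)) B ∧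
    B.PosSemidef ∧ 0 ≤ B.trace ∧ 0 ≤ B.trace / m :=
  stmt17_general S Splus hS hSplus A hrange δ hδ Sigm hSig B hB
end

section
/- Suppose A ∈ ℝ^{m×q} has full column rank, δ > 0, and Â, δ̂ satisfy simultaneously Â = S Â (δ̂ I_q + Σ̂⁻¹ Âᵀ S Â)⁻¹ and δ̂ = (1/m)[tr(S) − tr(Â Σ̂⁻¹ Âᵀ S)], where Σ̂ = δ̂ I_q + Âᵀ Â and S is symmetric PSD. Then S Â = Â(δ̂ I_q + Âᵀ Â); i.e., every fixed point of the EM iteration satisfies the ML stationarity equation. -/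
open Matrix

/-!
Write `M = δ I + Σ⁻¹ AᵀSA`. The first fixed-point equation says `A M = S A`. Multiplying by `Aᵀ`
gives `AᵀA M = AᵀSA`, so `Σ M = δ M + AᵀSA`, while by definition of `M` also `Σ M = δ Σ + AᵀSA`.
Hence `δ M = δ Σ`, so `M = Σ` and `S A = A Σ`.
-/

variable {m n K : Type*} [Fintype m] [Fintype n] [DecidableEq n]

/-- No invertibility of `M` is needed: for singular `M`, the junk value `M⁻¹ = 0` forces `A = 0`. -/
theorem Matrix.mul_eq_of_eq_mul_mul_nonsing_inv [CommRing K] {A : Matrix m n K}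
    {S : Matrix m m K} {M : Matrix n n K} (h : A = S * A * M⁻¹) : A * M = S * A := by
  by_cases hM : IsUnit M.det
  · conv_lhs => rw [h]
    exact Matrix.nonsing_inv_mul_cancel_right _ _ hM
  · rw [nonsing_inv_apply_not_isUnit M hM, Matrix.mul_zero] at h
    rw [h, Matrix.zero_mul, Matrix.mul_zero]

theorem Matrix.posDef_smul_one_add_transpose_mul_self {A : Matrix m n ℝ}
    {δ : ℝ} (hδ : 0 < δ) : (δ • (1 : Matrix n n ℝ) + Aᵀ * A).PosDef :=
  (PosDef.one.smul hδ).add_posSemidef (by simpa using posSemidef_conjTranspose_mul_self A)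

theorem Matrix.smul_one_add_inv_mul_eq_self [Field K] {A : Matrix m n K}
    {S : Matrix m m K} {δ : K} (hδ : δ ≠ 0) {Sig : Matrix n n K}
    (hSig : Sig = δ • (1 : Matrix n n K) + Aᵀ * A) (hSigUnit : IsUnit Sig)
    (hAM : A * (δ • 1 + Sig⁻¹ * (Aᵀ * S * A)) = S * A) :
    δ • 1 + Sig⁻¹ * (Aᵀ * S * A) = Sig := by
  set M := δ • 1 + Sig⁻¹ * (Aᵀ * S * A)
  have hSigM : Sig * M = δ • Sig + Aᵀ * S * A := by
    rw [Matrix.mul_add, Matrix.mul_smul, Matrix.mul_one, ← Matrix.mul_assoc,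
      Matrix.mul_nonsing_inv _ ((isUnit_iff_isUnit_det _).mp hSigUnit), Matrix.one_mul]
  have hδM : δ • M = δ • Sig := by
    have : Sig * M = δ • M + Aᵀ * S * A := by
      rw [hSig, Matrix.add_mul, Matrix.smul_mul, Matrix.one_mul, Matrix.mul_assoc, hAM,
        Matrix.mul_assoc]
    exact add_right_cancel (this.symm.trans hSigM)
  exact smul_right_injective _ hδ hδM

theorem stmt19_general {m q : ℕ} (S : Matrix (Fin m) (Fin m) ℝ)
    (Ahat : Matrix (Fin m) (Fin q) ℝ)
    (δhat : ℝ) (hδ : 0 < δhat)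
    (Sighat : Matrix (Fin q) (Fin q) ℝ)
    (hSig : Sighat = δhat • (1 : Matrix (Fin q) (Fin q) ℝ) + Ahatᵀ * Ahat)
    (hfix1 : Ahat = S * Ahat * (δhat • (1 : Matrix (Fin q) (Fin q) ℝ)
        + Sighat⁻¹ * (Ahatᵀ * S * Ahat))⁻¹) :
    S * Ahat = Ahat * (δhat • (1 : Matrix (Fin q) (Fin q) ℝ) + Ahatᵀ * Ahat) := by
  have hSigUnit : IsUnit Sighat := hSig ▸ (posDef_smul_one_add_transpose_mul_self hδ).isUnit
  have hAM := mul_eq_of_eq_mul_mul_nonsing_inv hfix1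
  rw [smul_one_add_inv_mul_eq_self hδ.ne' hSig hSigUnit hAM] at hAM
  rw [← hSig, hAM]

theorem stmt19 {m q : ℕ} (S : Matrix (Fin m) (Fin m) ℝ) (hS : S.PosSemidef)
    (Ahat : Matrix (Fin m) (Fin q) ℝ) (hrank : Ahat.rank = q)
    (δhat : ℝ) (hδ : 0 < δhat)
    (Sighat : Matrix (Fin q) (Fin q) ℝ)
    (hSig : Sighat = δhat • (1 : Matrix (Fin q) (Fin q) ℝ) + Ahatᵀ * Ahat)
    (hfix1 : Ahat = S * Ahat * (δhat • (1 : Matrix (Fin q) (Fin q) ℝ)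
        + Sighat⁻¹ * (Ahatᵀ * S * Ahat))⁻¹)
    (hfix2 : δhat = (1 / (m : ℝ)) * (S.trace - (Ahat * Sighat⁻¹ * Ahatᵀ * S).trace)) :
    S * Ahat = Ahat * (δhat • (1 : Matrix (Fin q) (Fin q) ℝ) + Ahatᵀ * Ahat) :=
  stmt19_general S Ahat δhat hδ Sighat hSig hfix1
end
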